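/- Let H = conv{(cos(kπ/3), sin(kπ/3)) : k = 0,…,5} be the unit hexagon, decomposed into the three unit rhombuses P₁ = conv{(0,0), (1,0), (1/2,√3/2), (−1/2,√3/2)}, P₂ = conv{(0,0), (−1/2,√3/2), (−1,0), (−1/2,−√3/2)}, P₃ = conv{(0,0), (−1/2,−√3/2), (1/2,−√3/2), (1,0)}. For independent P, Q each uniform in H, for independent P', Q' each uniform in P₁, and for independent P'' uniform in P₁ and Q'' uniform in P₂, the following mixture identity holds for every d ∈ ℝ: Prob(‖P − Q‖ ≤ d) = (1/3)·Prob(‖P' − Q'‖ ≤ d) + (2/3)·Prob(‖P'' − Q''‖ ≤ d). -/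

import Mathlib

/-!
The rotation `rot` by `2π/3` is a linear isometry of the plane mapping `P1 → P2 → P3 → P1`,
and the hexagon is the union of the three rhombi, which overlap only along segments. Hence the
uniform law on the hexagon is the average of the three uniform laws on the rhombi, and the law of
`(P, Q)` is the average of the nine laws of pairs of rhombus points. Distances are invariant under
rotating both points and under swapping them, so the three diagonal pairs all give the distance
law of `(P', Q')` and the six off-diagonal pairs that of `(P'', Q'')`: hence `3/9` and `6/9`.
-/

open MeasureTheory Real Set

noncomputable section

abbrev E2 := EuclideanSpace ℝ (Fin 2)

def pt (a b : ℝ) : E2 := WithLp.toLp 2 ![a, b]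

/-- The uniform probability measure on a set `K ⊆ ℝ²`: normalized restricted Lebesgue measure. -/
def unif (K : Set E2) : Measure E2 := (volume K)⁻¹ • volume.restrict K

/-- The unit hexagon: convex hull of the six points (cos(kπ/3), sin(kπ/3)). -/
def hexa : Set E2 :=
  convexHull ℝ (Set.range fun k : Fin 6 => pt (Real.cos (k * π / 3)) (Real.sin (k * π / 3)))

/-- P₁ = conv{(0,0), (1,0), (1/2,√3/2), (−1/2,√3/2)}. -/
def P1 : Set E2 :=
  convexHull ℝ {pt 0 0, pt 1 0, pt (1/2) (Real.sqrt 3 / 2), pt (-(1/2)) (Real.sqrt 3 / 2)}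

/-- P₂ = conv{(0,0), (−1/2,√3/2), (−1,0), (−1/2,−√3/2)}. -/
def P2 : Set E2 :=
  convexHull ℝ {pt 0 0, pt (-(1/2)) (Real.sqrt 3 / 2), pt (-1) 0,
    pt (-(1/2)) (-(Real.sqrt 3 / 2))}

/-- P₃ = conv{(0,0), (−1/2,−√3/2), (1/2,−√3/2), (1,0)}. -/
def P3 : Set E2 :=
  convexHull ℝ {pt 0 0, pt (-(1/2)) (-(Real.sqrt 3 / 2)), pt (1/2) (-(Real.sqrt 3 / 2)),
    pt 1 0}

open scoped ENNReal

open scoped Pointwise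

section Parallelogram

variable {E F : Type*} [AddCommGroup E] [Module ℝ E] [AddCommGroup F] [Module ℝ F]

theorem convexHull_parallelogram_eq_parallelepiped (a b : E) :
    convexHull ℝ {0, a, a + b, b} = parallelepiped ![a, b] := by
  rw [parallelepiped_eq_convexHull, Fin.sum_univ_two]
  congr 1
  ext x
  simp only [Set.mem_insert_iff, Set.mem_singleton_iff, Matrix.cons_val_zero,
    Matrix.cons_val_one, Set.mem_add, exists_eq_or_imp, add_zero, zero_add]
  aesop

theorem mem_convexHull_parallelogram_iff {a b x : E} {f g : E →ₗ[ℝ] ℝ}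
    (hfa : f a = 1) (hfb : f b = 0) (hga : g a = 0) (hgb : g b = 1)
    (hx : f x • a + g x • b = x) :
    x ∈ convexHull ℝ {0, a, a + b, b} ↔ f x ∈ Icc 0 1 ∧ g x ∈ Icc 0 1 := by
  rw [convexHull_parallelogram_eq_parallelepiped, mem_parallelepiped_iff]
  constructor
  · rintro ⟨t, ht, rfl⟩
    simp only [Fin.sum_univ_two, Matrix.cons_val_zero, Matrix.cons_val_one, map_add, map_smul,
      hfa, hfb, hga, hgb, smul_eq_mul, mul_one, mul_zero, add_zero, zero_add]
    exact ⟨⟨ht.1 0, ht.2 0⟩, ⟨ht.1 1, ht.2 1⟩⟩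
  · rintro ⟨hf, hg⟩
    refine ⟨![f x, g x], ⟨?_, ?_⟩, by simp [Fin.sum_univ_two, hx]⟩ <;> intro i <;> fin_cases i
    all_goals simp [hf.1, hf.2, hg.1, hg.2]

theorem image_convexHull_parallelogram {G : Type*} [FunLike G E F] [LinearMapClass G ℝ E F]
    (φ : G) (a b : E) :
    φ '' convexHull ℝ {0, a, a + b, b} = convexHull ℝ {0, φ a, φ a + φ b, φ b} := by
  simpa [Set.image_insert_eq] using (φ : E →ₗ[ℝ] F).image_convexHull {0, a, a + b, b}

end Parallelogram

theorem MeasureTheory.Measure.addHaar_ker_eq_zero {E : Type*} [NormedAddCommGroup E] [NormedSpace ℝ E]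
    [MeasurableSpace E] [BorelSpace E] [FiniteDimensional ℝ E] (μ : Measure E)
    [μ.IsAddHaarMeasure] {f : E →ₗ[ℝ] ℝ} (hf : f ≠ 0) : μ (LinearMap.ker f) = 0 :=
  Measure.addHaar_submodule μ _ (by rwa [Ne, LinearMap.ker_eq_top])

theorem LinearIsometryEquiv.volume_image {E : Type*} [NormedAddCommGroup E]
    [InnerProductSpace ℝ E] [FiniteDimensional ℝ E] [MeasurableSpace E] [BorelSpace E]
    (e : E ≃ₗᵢ[ℝ] E) (K : Set E) : volume (e '' K) = volume K := by
  rw [e.image_eq_preimage_symm,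
    e.symm.measurePreserving.measure_preimage_emb e.symm.toHomeomorph.measurableEmbedding]

section DistanceLaw

variable {X : Type*} [PseudoMetricSpace X] [SecondCountableTopology X] [MeasurableSpace X]
  [BorelSpace X] {μ ν : Measure X} [SFinite μ] [SFinite ν] (d : ℝ)

theorem measurableSet_setOf_dist_le : MeasurableSet {p : X × X | dist p.1 p.2 ≤ d} :=
  measurableSet_le measurable_dist measurable_const

theorem MeasureTheory.Measure.prod_swap_setOf_dist_le :
    (ν.prod μ) {p : X × X | dist p.1 p.2 ≤ d} = (μ.prod ν) {p : X × X | dist p.1 p.2 ≤ d} := by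
  rw [← Measure.prod_swap, Measure.map_apply measurable_swap (measurableSet_setOf_dist_le d)]
  simp only [Set.preimage_ofPred_eq, Prod.fst_swap, Prod.snd_swap, dist_comm]

theorem Isometry.prod_map_setOf_dist_le {f : X → X} (hf : Isometry f) :
    ((μ.map f).prod (ν.map f)) {p : X × X | dist p.1 p.2 ≤ d} =
      (μ.prod ν) {p : X × X | dist p.1 p.2 ≤ d} := by
  have hfm : Measurable f := hf.continuous.measurable
  rw [Measure.map_prod_map _ _ hfm hfm,
    Measure.map_apply (hfm.prodMap hfm) (measurableSet_setOf_dist_le d)]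
  simp only [Set.preimage_ofPred_eq, Prod.map_fst, Prod.map_snd, hf.dist_eq]

theorem Isometry.prod_add_add_setOf_dist_le {μ₁ μ₂ μ₃ : Measure X} [SFinite μ₁] [SFinite μ₂]
    [SFinite μ₃] {f : X → X} (hf : Isometry f) (h₁ : μ₁.map f = μ₂) (h₂ : μ₂.map f = μ₃)
    (h₃ : μ₃.map f = μ₁) :
    ((μ₁ + μ₂ + μ₃).prod (μ₁ + μ₂ + μ₃)) {p : X × X | dist p.1 p.2 ≤ d} =
      3 * (μ₁.prod μ₁) {p : X × X | dist p.1 p.2 ≤ d} +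
        6 * (μ₁.prod μ₂) {p : X × X | dist p.1 p.2 ≤ d} := by
  have h22 := hf.prod_map_setOf_dist_le (μ := μ₁) (ν := μ₁) d
  have h33 := hf.prod_map_setOf_dist_le (μ := μ₂) (ν := μ₂) d
  have h23 := hf.prod_map_setOf_dist_le (μ := μ₁) (ν := μ₂) d
  have h31 := hf.prod_map_setOf_dist_le (μ := μ₂) (ν := μ₃) d
  rw [h₁] at h22 h23
  rw [h₂] at h33 h23 h31
  rw [h₃] at h31
  simp only [Measure.prod_add, Measure.add_prod, Measure.add_apply]
  rw [Measure.prod_swap_setOf_dist_le (μ := μ₁) (ν := μ₂),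
    Measure.prod_swap_setOf_dist_le (μ := μ₃) (ν := μ₁),
    Measure.prod_swap_setOf_dist_le (μ := μ₂) (ν := μ₃), h33, h22, h31, h23]
  ring

end DistanceLaw

instance (K : Set E2) : SFinite (unif K) := by
  rw [unif]; infer_instance

theorem map_unif (e : E2 ≃ₗᵢ[ℝ] E2) (K : Set E2) : (unif K).map e = unif (e '' K) := by
  rw [unif, unif, Measure.map_smul,
    (e.measurePreserving.restrict_image_emb e.toHomeomorph.measurableEmbedding K).map_eq,
    e.volume_image]

theorem unif_union_union {A B C : Set E2} (hAB : AEDisjoint volume A B)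
    (hAC : AEDisjoint volume A C) (hBC : AEDisjoint volume B C) (hB : NullMeasurableSet B)
    (hC : NullMeasurableSet C) (hvB : volume B = volume A) (hvC : volume C = volume A) :
    unif (A ∪ B ∪ C) = (3 : ℝ≥0∞)⁻¹ • (unif A + unif B + unif C) := by
  have hres : volume.restrict (A ∪ B ∪ C) =
      volume.restrict A + volume.restrict B + volume.restrict C := by
    rw [Measure.restrict_union₀ (hAC.union_left hBC) hC, Measure.restrict_union₀ hAB hB]
  have hvol : volume (A ∪ B ∪ C) = 3 * volume A := by
    rw [← Measure.restrict_apply_univ, hres]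
    simp only [Measure.add_apply, Measure.restrict_apply_univ, hvB, hvC]
    ring
  rw [unif, hvol, hres, unif, unif, unif, hvB, hvC,
    ENNReal.mul_inv (Or.inl three_ne_zero) (Or.inl ENNReal.ofNat_ne_top), mul_smul]
  simp only [smul_add]

@[simp] theorem pt_apply_zero (a b : ℝ) : pt a b 0 = a := rfl
@[simp] theorem pt_apply_one (a b : ℝ) : pt a b 1 = b := rfl

theorem pt_add_pt (a b a' b' : ℝ) : pt a b + pt a' b' = pt (a + a') (b + b') := by
  ext i; fin_cases i <;> rfl

theorem neg_pt (a b : ℝ) : -pt a b = pt (-a) (-b) := by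
  ext i; fin_cases i <;> rfl

theorem pt_zero_zero : pt 0 0 = 0 := by
  ext i; fin_cases i <;> rfl

def u₁ : E2 := pt 1 0
def u₂ : E2 := pt (-(1/2)) (√3/2)
def u₃ : E2 := pt (-(1/2)) (-(√3/2))

theorem u₁_add_u₂ : u₁ + u₂ = -u₃ := by
  rw [u₁, u₂, u₃, pt_add_pt, neg_pt]; norm_num

theorem u₂_add_u₃ : u₂ + u₃ = -u₁ := by
  rw [u₁, u₂, u₃, pt_add_pt, neg_pt]; norm_num

theorem u₃_add_u₁ : u₃ + u₁ = -u₂ := by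
  rw [u₁, u₂, u₃, pt_add_pt, neg_pt]; norm_num

theorem P1_eq : P1 = convexHull ℝ {0, u₁, u₁ + u₂, u₂} := by
  rw [P1, u₁, u₂, pt_add_pt, pt_zero_zero]; norm_num

theorem P2_eq : P2 = convexHull ℝ {0, u₂, u₂ + u₃, u₃} := by
  rw [P2, u₂, u₃, pt_add_pt, pt_zero_zero]; norm_num

theorem P3_eq : P3 = convexHull ℝ {0, u₃, u₃ + u₁, u₁} := by
  rw [P3, u₃, u₁, pt_add_pt, pt_zero_zero]; norm_num

theorem hexa_eq : hexa = convexHull ℝ {u₁, -u₃, u₂, -u₁, u₃, -u₂} := by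
  have h2 : 2 * π / 3 = π - π / 3 := by ring
  have h4 : 4 * π / 3 = π / 3 + π := by ring
  have h5 : 5 * π / 3 = 2 * π - π / 3 := by ring
  have hv : (fun k : Fin 6 => pt (Real.cos (k * π / 3)) (Real.sin (k * π / 3))) =
      ![u₁, -u₃, u₂, -u₁, u₃, -u₂] := by
    funext k
    fin_cases k <;> simp [h2, h4, h5, u₁, u₂, u₃, neg_pt, Real.cos_pi_sub, Real.sin_pi_sub,
      Real.cos_add_pi, Real.sin_add_pi, Real.cos_two_pi_sub, Real.sin_two_pi_sub]
  rw [hexa, hv]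
  simp only [Matrix.range_cons, Matrix.range_empty, Set.union_empty, Set.singleton_union]

def coordS : E2 →ₗ[ℝ] ℝ := EuclideanSpace.projₗ 0 + (√3)⁻¹ • EuclideanSpace.projₗ 1
def coordT : E2 →ₗ[ℝ] ℝ := (2 / √3) • EuclideanSpace.projₗ 1

theorem coordS_apply (x : E2) : coordS x = x 0 + x 1 / √3 := by
  simp [coordS, div_eq_inv_mul]

theorem coordT_apply (x : E2) : coordT x = 2 * x 1 / √3 := by
  simp only [coordT, LinearMap.smul_apply, PiLp.projₗ_apply, smul_eq_mul]; ring

@[simp] theorem coordS_u₁ : coordS u₁ = 1 := by simp [coordS_apply, u₁]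
@[simp] theorem coordT_u₁ : coordT u₁ = 0 := by simp [coordT_apply, u₁]
@[simp] theorem coordS_u₂ : coordS u₂ = 0 := by
  rw [coordS_apply, u₂, pt_apply_zero, pt_apply_one]; field_simp; ring
@[simp] theorem coordT_u₂ : coordT u₂ = 1 := by
  rw [coordT_apply, u₂, pt_apply_one]; field_simp
@[simp] theorem coordS_u₃ : coordS u₃ = -1 := by
  rw [coordS_apply, u₃, pt_apply_zero, pt_apply_one]; field_simp; ring
@[simp] theorem coordT_u₃ : coordT u₃ = -1 := by
  rw [coordT_apply, u₃, pt_apply_one]; field_simp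

theorem coordS_smul_add_coordT_smul (x : E2) : coordS x • u₁ + coordT x • u₂ = x := by
  ext i; fin_cases i
  · simp only [Fin.zero_eta, PiLp.add_apply, PiLp.smul_apply, smul_eq_mul, coordS_apply,
      coordT_apply, u₁, u₂, pt_apply_zero]
    field_simp; ring
  · simp only [Fin.mk_one, PiLp.add_apply, PiLp.smul_apply, smul_eq_mul, coordS_apply,
      coordT_apply, u₁, u₂, pt_apply_one]
    field_simp
    ring

theorem mem_P1_iff (x : E2) : x ∈ P1 ↔ coordS x ∈ Icc 0 1 ∧ coordT x ∈ Icc 0 1 := by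
  rw [P1_eq]
  exact mem_convexHull_parallelogram_iff (by simp) (by simp) (by simp) (by simp)
    (coordS_smul_add_coordT_smul x)

theorem mem_P2_iff (x : E2) :
    x ∈ P2 ↔ coordT x - coordS x ∈ Icc 0 1 ∧ -coordS x ∈ Icc 0 1 := by
  rw [P2_eq]
  refine mem_convexHull_parallelogram_iff (f := coordT - coordS) (g := -coordS) (by simp)
    (by simp) (by simp) (by simp) ?_
  have h₃ : u₃ = -(u₁ + u₂) := by rw [u₁_add_u₂, neg_neg]
  simp only [LinearMap.sub_apply, LinearMap.neg_apply, h₃]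
  linear_combination (norm := module) coordS_smul_add_coordT_smul x

theorem mem_P3_iff (x : E2) :
    x ∈ P3 ↔ -coordT x ∈ Icc 0 1 ∧ coordS x - coordT x ∈ Icc 0 1 := by
  rw [P3_eq]
  refine mem_convexHull_parallelogram_iff (f := -coordT) (g := coordS - coordT) (by simp)
    (by simp) (by simp) (by simp) ?_
  have h₃ : u₃ = -(u₁ + u₂) := by rw [u₁_add_u₂, neg_neg]
  simp only [LinearMap.sub_apply, LinearMap.neg_apply, h₃]
  linear_combination (norm := module) coordS_smul_add_coordT_smul x

theorem hexa_subset_union : hexa ⊆ P1 ∪ P2 ∪ P3 := by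
  intro x hx
  have hconv : Convex ℝ (coordS ⁻¹' Icc (-1) 1 ∩ coordT ⁻¹' Icc (-1) 1 ∩
      (coordS - coordT) ⁻¹' Icc (-1) 1) :=
    (((convex_Icc _ _).linear_preimage _).inter ((convex_Icc _ _).linear_preimage _)).inter
      ((convex_Icc _ _).linear_preimage _)
  rw [hexa_eq] at hx
  have hbound := convexHull_min (by simp [Set.insert_subset_iff]) hconv hx
  simp only [Set.mem_inter_iff, Set.mem_preimage, Set.mem_Icc, LinearMap.sub_apply] at hbound
  rw [Set.mem_union, Set.mem_union, mem_P1_iff, mem_P2_iff, mem_P3_iff]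
  simp only [Set.mem_Icc]
  rcases le_or_gt 0 (coordS x) with hs | hs <;> rcases le_or_gt 0 (coordT x) with ht | ht
  · exact Or.inl (Or.inl ⟨⟨hs, by linarith⟩, ⟨ht, by linarith⟩⟩)
  · exact Or.inr ⟨⟨by linarith, by linarith⟩, ⟨by linarith, by linarith⟩⟩
  · exact Or.inl (Or.inr ⟨⟨by linarith, by linarith⟩, ⟨by linarith, by linarith⟩⟩)
  rcases le_total (coordS x) (coordT x) with hst | hst
  · exact Or.inl (Or.inr ⟨⟨by linarith, by linarith⟩, ⟨by linarith, by linarith⟩⟩)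
  · exact Or.inr ⟨⟨by linarith, by linarith⟩, ⟨by linarith, by linarith⟩⟩

theorem union_subset_hexa : P1 ∪ P2 ∪ P3 ⊆ hexa := by
  rw [hexa_eq, P1_eq, P2_eq, P3_eq, u₁_add_u₂, u₂_add_u₃, u₃_add_u₁]
  set V : Set E2 := {u₁, -u₃, u₂, -u₁, u₃, -u₂}
  have hV : ∀ z ∈ V, z ∈ convexHull ℝ V := fun z hz => subset_convexHull ℝ V hz
  have h0 : (0 : E2) ∈ convexHull ℝ V := by
    simpa using convex_convexHull ℝ V (hV u₁ (by simp [V])) (hV (-u₁) (by simp [V]))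
      (by norm_num : (0 : ℝ) ≤ 1 / 2) (by norm_num : (0 : ℝ) ≤ 1 / 2) (by norm_num)
  refine Set.union_subset (Set.union_subset ?_ ?_) ?_ <;>
    refine convexHull_min ?_ (convex_convexHull ℝ V) <;>
    rintro z (rfl | rfl | rfl | rfl) <;> first | exact h0 | exact hV _ (by simp [V])

theorem hexa_eq_union : hexa = P1 ∪ P2 ∪ P3 :=
  hexa_subset_union.antisymm union_subset_hexa

theorem aedisjoint_P1_P2 : AEDisjoint volume P1 P2 := by
  refine measure_mono_null (fun x ⟨h₁, h₂⟩ => ?_)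
    (Measure.addHaar_ker_eq_zero volume (f := coordS) fun h => by simpa [h] using coordS_u₁)
  rw [mem_P1_iff] at h₁
  rw [mem_P2_iff] at h₂
  rw [SetLike.mem_coe, LinearMap.mem_ker]
  linarith [h₁.1.1, h₂.2.1]

theorem aedisjoint_P1_P3 : AEDisjoint volume P1 P3 := by
  refine measure_mono_null (fun x ⟨h₁, h₃⟩ => ?_)
    (Measure.addHaar_ker_eq_zero volume (f := coordT) fun h => by simpa [h] using coordT_u₂)
  rw [mem_P1_iff] at h₁
  rw [mem_P3_iff] at h₃
  rw [SetLike.mem_coe, LinearMap.mem_ker]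
  linarith [h₁.2.1, h₃.1.1]

theorem aedisjoint_P2_P3 : AEDisjoint volume P2 P3 := by
  refine measure_mono_null (fun x ⟨h₂, h₃⟩ => ?_)
    (Measure.addHaar_ker_eq_zero volume (f := coordS - coordT)
      fun h => by simpa using congrArg (· u₁) h)
  rw [mem_P2_iff] at h₂
  rw [mem_P3_iff] at h₃
  rw [SetLike.mem_coe, LinearMap.mem_ker, LinearMap.sub_apply]
  linarith [h₂.1.1, h₃.2.1]

theorem measurableSet_P2 : MeasurableSet P2 := by
  unfold P2
  exact ((Set.toFinite _).isCompact_convexHull (𝕜 := ℝ)).isClosed.measurableSet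

theorem measurableSet_P3 : MeasurableSet P3 := by
  unfold P3
  exact ((Set.toFinite _).isCompact_convexHull (𝕜 := ℝ)).isClosed.measurableSet

def rot : E2 ≃ₗᵢ[ℝ] E2 :=
  LinearIsometry.toLinearIsometryEquiv
    { toFun x := pt (-(x 0) / 2 - √3 / 2 * x 1) (√3 / 2 * x 0 - x 1 / 2)
      map_add' x y := by
        ext i; fin_cases i <;> simp only [Fin.zero_eta, Fin.mk_one, PiLp.add_apply, pt_apply_zero,
          pt_apply_one] <;> ring
      map_smul' c x := by
        ext i; fin_cases i <;> simp only [Fin.zero_eta, Fin.mk_one, PiLp.smul_apply, smul_eq_mul,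
          pt_apply_zero, pt_apply_one, RingHom.id_apply] <;> ring
      norm_map' x := by
        simp only [LinearMap.coe_mk, AddHom.coe_mk, EuclideanSpace.norm_eq, Fin.sum_univ_two,
          Real.norm_eq_abs, sq_abs, pt_apply_zero, pt_apply_one]
        congr 1
        linear_combination (x 0 ^ 2 + x 1 ^ 2) / 4 * Real.sq_sqrt (show (0 : ℝ) ≤ 3 by norm_num) }
    rfl

theorem rot_apply (x : E2) :
    rot x = pt (-(x 0) / 2 - √3 / 2 * x 1) (√3 / 2 * x 0 - x 1 / 2) := rfl

theorem rot_u₁ : rot u₁ = u₂ := by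
  rw [rot_apply, u₁, u₂]; norm_num

theorem rot_u₂ : rot u₂ = u₃ := by
  have h := Real.mul_self_sqrt (show (0 : ℝ) ≤ 3 by norm_num)
  rw [rot_apply, u₂, u₃]
  congr 1
  · simp only [pt_apply_zero, pt_apply_one]; linear_combination (-1/4 : ℝ) * h
  · simp only [pt_apply_zero, pt_apply_one]; ring

theorem rot_u₃ : rot u₃ = u₁ := by
  have h := Real.mul_self_sqrt (show (0 : ℝ) ≤ 3 by norm_num)
  rw [rot_apply, u₃, u₁]
  congr 1
  · simp only [pt_apply_zero, pt_apply_one]; linear_combination (1/4 : ℝ) * h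
  · simp only [pt_apply_zero, pt_apply_one]; ring

theorem rot_image_P1 : rot '' P1 = P2 := by
  rw [P1_eq, P2_eq, image_convexHull_parallelogram, rot_u₁, rot_u₂]

theorem rot_image_P2 : rot '' P2 = P3 := by
  rw [P2_eq, P3_eq, image_convexHull_parallelogram, rot_u₂, rot_u₃]

theorem rot_image_P3 : rot '' P3 = P1 := by
  rw [P3_eq, P1_eq, image_convexHull_parallelogram, rot_u₃, rot_u₁]

/-- Mixture identity: the CDF of the distance between two uniform points of the unit
hexagon is the (1/3, 2/3)-mixture of the within-rhombus and adjacent-rhombus CDFs. -/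
theorem stmt4 :
    ∀ d : ℝ,
      ((unif hexa).prod (unif hexa)) {p : E2 × E2 | dist p.1 p.2 ≤ d} =
        (1/3 : ℝ≥0∞) * ((unif P1).prod (unif P1)) {p : E2 × E2 | dist p.1 p.2 ≤ d}
          + (2/3 : ℝ≥0∞) * ((unif P1).prod (unif P2)) {p : E2 × E2 | dist p.1 p.2 ≤ d} := by
  intro d
  have h₁ : (unif P1).map rot = unif P2 := by rw [map_unif, rot_image_P1]
  have h₂ : (unif P2).map rot = unif P3 := by rw [map_unif, rot_image_P2]
  have h₃ : (unif P3).map rot = unif P1 := by rw [map_unif, rot_image_P3]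
  have hvol₂ : volume P2 = volume P1 := by rw [← rot_image_P1, rot.volume_image]
  have hvol₃ : volume P3 = volume P1 := by rw [← rot_image_P2, rot.volume_image, hvol₂]
  rw [hexa_eq_union, unif_union_union aedisjoint_P1_P2 aedisjoint_P1_P3 aedisjoint_P2_P3
      measurableSet_P2.nullMeasurableSet measurableSet_P3.nullMeasurableSet hvol₂ hvol₃,
    Measure.prod_smul_left, Measure.prod_smul_right, Measure.smul_apply, Measure.smul_apply,
    rot.isometry.prod_add_add_setOf_dist_le d h₁ h₂ h₃, smul_eq_mul, smul_eq_mul, one_div,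
    ENNReal.div_eq_inv_mul]
  generalize ((unif P1).prod (unif P1)) {p : E2 × E2 | dist p.1 p.2 ≤ d} = A
  generalize ((unif P1).prod (unif P2)) {p : E2 × E2 | dist p.1 p.2 ≤ d} = B
  have h3 : (3 : ℝ≥0∞)⁻¹ * 3 = 1 := ENNReal.inv_mul_cancel three_ne_zero ENNReal.ofNat_ne_top
  calc 3⁻¹ * (3⁻¹ * (3 * A + 6 * B)) = (3⁻¹ * 3) * (3⁻¹ * A) + (3⁻¹ * 3) * (3⁻¹ * 2 * B) := by
        ring
    _ = 3⁻¹ * A + 3⁻¹ * 2 * B := by rw [h3, one_mul, one_mul]
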